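/- arXiv:2201.12781 — 3 statements merged into one kernel-verified Lean document; each statement's English description precedes it below -/
import Mathlib

section
/- The magnitude of dual complex numbers satisfies the triangle inequality: |p + q| ≤ |p| + |q| for all dual complex numbers p, q, where ≤ is the total order on dual numbers. -/
open TrivSqZeroExt

/-- The magnitude of a dual complex number `q = q_st + q_I ε`, a dual number:
`|q| = |q_st| + (Re(q_st·conj(q_I))/|q_st|) ε` if `q_st ≠ 0`, and `|q| = |q_I| ε` otherwise. -/
noncomputable def dcAbs (q : DualNumber ℂ) : DualNumber ℝ :=
  if q.fst ≠ 0 then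
    (‖q.fst‖, (q.fst * starRingEnd ℂ q.snd).re / ‖q.fst‖)
  else (0, ‖q.snd‖)

/-- The order on dual numbers: `a + bε ≤ c + dε` iff `a < c`, or `a = c` and `b ≤ d`. -/
def dualLe (p q : DualNumber ℝ) : Prop :=
  p.fst < q.fst ∨ (p.fst = q.fst ∧ p.snd ≤ q.snd)

/-! The standard part of `|q|` is `‖q_st‖`, so the dual parts only matter when
`‖p_st + q_st‖ = ‖p_st‖ + ‖q_st‖`, i.e. when `p_st` and `q_st` lie on a common ray.
The dual part of `|q|` is the largest value of `Re (u · conj q_I)` over unit `u` with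
`q_st = ‖q_st‖ u` (one such `u` if `q_st ≠ 0`, every unit `u` if `q_st = 0`). A unit `u` along
`p_st + q_st` is then along both `p_st` and `q_st`, so the dual part of `|p + q|` equals
`Re (u · conj p_I) + Re (u · conj q_I)`, which is at most the sum of the dual parts of `|p|` and `|q|`. -/

open ComplexConjugate

theorem SameRay.eq_norm_smul_of_add_eq_norm_smul {E : Type*} [NormedAddCommGroup E]
    [NormedSpace ℝ E] {x y u : E} (h : SameRay ℝ x y) (hu : x + y = ‖x + y‖ • u) :
    x = ‖x‖ • u := by
  have hx : ‖x‖ • (x + y) = ‖x + y‖ • x := (SameRay.rfl.add_right h).norm_smul_eq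
  rcases eq_or_ne ‖x + y‖ 0 with h0 | h0
  · have : ‖x‖ = 0 := by linarith [h.norm_add, norm_nonneg x, norm_nonneg y]
    rw [this, zero_smul]
    exact norm_eq_zero.mp this
  · rw [hu, smul_comm, ← hu] at hx
    exact (smul_right_injective E h0 hx).symm

theorem Complex.re_mul_conj_of_eq_norm_smul {u z : ℂ} (hu : ‖u‖ = 1) (hz : z = ‖z‖ • u) :
    (u * conj z).re = ‖z‖ := by
  conv_lhs => rw [hz, Complex.real_smul, map_mul, Complex.conj_ofReal, mul_left_comm,
    Complex.mul_conj, Complex.normSq_eq_norm_sq, hu]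
  simp

theorem Complex.eq_norm_smul_exp_arg_mul_I (z : ℂ) : z = ‖z‖ • exp (arg z * I) := by
  rw [Complex.real_smul, Complex.norm_mul_exp_arg_mul_I]

theorem fst_dcAbs (q : DualNumber ℂ) : (dcAbs q).fst = ‖q.fst‖ := by
  by_cases h : q.fst = 0
  · rw [h, norm_zero]
    exact congrArg Prod.fst (if_neg (not_not.mpr h))
  · exact congrArg Prod.fst (if_pos h)

theorem snd_dcAbs_of_fst_eq_zero {q : DualNumber ℂ} (h : q.fst = 0) :
    (dcAbs q).snd = ‖q.snd‖ :=
  congrArg Prod.snd (if_neg (not_not.mpr h))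

theorem snd_dcAbs_of_fst_ne_zero {q : DualNumber ℂ} (h : q.fst ≠ 0) :
    (dcAbs q).snd = (q.fst * conj q.snd).re / ‖q.fst‖ :=
  congrArg Prod.snd (if_pos h)

theorem snd_dcAbs_of_eq_norm_smul {q : DualNumber ℂ} (h : q.fst ≠ 0) {u : ℂ}
    (hu : q.fst = ‖q.fst‖ • u) : (dcAbs q).snd = (u * conj q.snd).re := by
  rw [snd_dcAbs_of_fst_ne_zero h, div_eq_iff (norm_ne_zero_iff.mpr h)]
  conv_lhs => rw [hu, smul_mul_assoc, Complex.smul_re, smul_eq_mul]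
  exact mul_comm _ _

theorem re_mul_conj_snd_le_snd_dcAbs {q : DualNumber ℂ} {u : ℂ} (hu : ‖u‖ = 1)
    (hq : q.fst = ‖q.fst‖ • u) : (u * conj q.snd).re ≤ (dcAbs q).snd := by
  by_cases h : q.fst = 0
  · rw [snd_dcAbs_of_fst_eq_zero h]
    calc (u * conj q.snd).re ≤ ‖u * conj q.snd‖ := Complex.re_le_norm _
      _ = ‖q.snd‖ := by rw [norm_mul, Complex.norm_conj, hu, one_mul]
  · exact (snd_dcAbs_of_eq_norm_smul h hq).ge

theorem exists_snd_dcAbs_eq_re_mul_conj (q : DualNumber ℂ) :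
    ∃ u : ℂ, ‖u‖ = 1 ∧ q.fst = ‖q.fst‖ • u ∧ (dcAbs q).snd = (u * conj q.snd).re := by
  by_cases h : q.fst = 0
  · refine ⟨Complex.exp (q.snd.arg * Complex.I), Complex.norm_exp_ofReal_mul_I _, by simp [h], ?_⟩
    rw [snd_dcAbs_of_fst_eq_zero h, Complex.re_mul_conj_of_eq_norm_smul
      (Complex.norm_exp_ofReal_mul_I _) (Complex.eq_norm_smul_exp_arg_mul_I _)]
  · exact ⟨Complex.exp (q.fst.arg * Complex.I), Complex.norm_exp_ofReal_mul_I _,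
      Complex.eq_norm_smul_exp_arg_mul_I _,
      snd_dcAbs_of_eq_norm_smul h (Complex.eq_norm_smul_exp_arg_mul_I _)⟩

/-- Triangle inequality for the magnitude of dual complex numbers:
`|p + q| ≤ |p| + |q|` with respect to the total order on dual numbers. -/
theorem dcAbs_add_le (p q : DualNumber ℂ) :
    dualLe (dcAbs (p + q)) (dcAbs p + dcAbs q) := by
  unfold dualLe
  simp only [fst_add, snd_add, fst_dcAbs]
  rcases (norm_add_le p.fst q.fst).lt_or_eq with hlt | heq
  · exact Or.inl hlt
  refine Or.inr ⟨heq, ?_⟩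
  obtain ⟨u, hu, hpq, hsnd⟩ := exists_snd_dcAbs_eq_re_mul_conj (p + q)
  rw [fst_add] at hpq
  have hray : SameRay ℝ p.fst q.fst := sameRay_iff_norm_add.mpr heq
  have hp : p.fst = ‖p.fst‖ • u := hray.eq_norm_smul_of_add_eq_norm_smul hpq
  have hq : q.fst = ‖q.fst‖ • u :=
    hray.symm.eq_norm_smul_of_add_eq_norm_smul (by rwa [add_comm])
  calc (dcAbs (p + q)).snd = (u * conj p.snd).re + (u * conj q.snd).re := by
        rw [hsnd, snd_add, map_add, mul_add, Complex.add_re]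
    _ ≤ (dcAbs p).snd + (dcAbs q).snd :=
        add_le_add (re_mul_conj_snd_le_snd_dcAbs hu hp) (re_mul_conj_snd_le_snd_dcAbs hu hq)
end

section
/- Let A = A_st + A_I ε be a Hermitian dual complex matrix and suppose λ = λ_st + λ_I ε (a dual number) is an eigenvalue of A with eigenvector x = x_st + x_I ε, x_st ≠ 0. Then λ_I = (x_st* A_I x_st)/(x_st* x_st). -/
open TrivSqZeroExt Matrix

/-- Conjugate of a dual complex number: componentwise complex conjugation. -/
noncomputable def dcConj (q : DualNumber ℂ) : DualNumber ℂ :=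
  (starRingEnd ℂ q.fst, starRingEnd ℂ q.snd)

/-- Conjugate transpose of a dual complex matrix. -/
noncomputable def dcCT {m n : Type*} (A : Matrix m n (DualNumber ℂ)) :
    Matrix n m (DualNumber ℂ) :=
  fun i j => dcConj (A j i)

/-- For a Hermitian dual complex matrix `A = A_st + A_I ε` with eigenvalue
`λ = λ_st + λ_I ε` (a dual number) and eigenvector `x = x_st + x_I ε`, `x_st ≠ 0`,
the infinitesimal part satisfies `λ_I = (x_st* A_I x_st)/(x_st* x_st)`. -/
theorem dc_hermitian_eigen_infinitesimal {n : ℕ}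
    (A : Matrix (Fin n) (Fin n) (DualNumber ℂ)) (hA : dcCT A = A)
    (lam : DualNumber ℂ) (hlam1 : lam.fst.im = 0) (hlam2 : lam.snd.im = 0)
    (x : Fin n → DualNumber ℂ) (hx : (fun i => (x i).fst) ≠ 0)
    (h : A *ᵥ x = lam • x) :
    lam.snd =
      ((fun i => starRingEnd ℂ (x i).fst) ⬝ᵥ ((A.map snd) *ᵥ fun i => (x i).fst)) /
        ((fun i => starRingEnd ℂ (x i).fst) ⬝ᵥ fun i => (x i).fst) := by
  set xs : Fin n → ℂ := fun i => (x i).fst with hxs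
  set xI : Fin n → ℂ := fun i => (x i).snd with hxI
  set As : Matrix (Fin n) (Fin n) ℂ := A.map fst with hAs
  set AI : Matrix (Fin n) (Fin n) ℂ := A.map snd with hAI
  have hAsH : Asᴴ = As := by
    ext i j
    have := congrFun (congrFun hA i) j
    have h1 := congrArg TrivSqZeroExt.fst this
    simpa [dcCT, dcConj, hAs, Matrix.conjTranspose_apply, Matrix.map_apply] using h1
  have hAIH : AIᴴ = AI := by
    ext i j
    have := congrFun (congrFun hA i) j
    have h2 := congrArg TrivSqZeroExt.snd this
    simpa [dcCT, dcConj, hAI, Matrix.conjTranspose_apply, Matrix.map_apply] using h2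
  have hlamfst : starRingEnd ℂ lam.fst = lam.fst := Complex.conj_eq_iff_im.2 hlam1
  have h1 : As *ᵥ xs = lam.fst • xs := by
    funext i
    have := congrArg TrivSqZeroExt.fst (congrFun h i)
    simpa [Matrix.mulVec, dotProduct, hAs, hxs, Matrix.map_apply, smul_eq_mul,
      TrivSqZeroExt.fst_sum, TrivSqZeroExt.fst_mul] using this
  have h2 : As *ᵥ xI + AI *ᵥ xs = lam.fst • xI + lam.snd • xs := by
    funext i
    have := congrArg TrivSqZeroExt.snd (congrFun h i)
    simp only [Matrix.mulVec, dotProduct, TrivSqZeroExt.snd_sum,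
      TrivSqZeroExt.snd_mul, Pi.smul_apply, smul_eq_mul, Pi.add_apply] at this ⊢
    simpa [hAs, hAI, hxs, hxI, Matrix.map_apply, Finset.sum_add_distrib] using this
  have key : star xs ⬝ᵥ (AI *ᵥ xs) = lam.snd * (star xs ⬝ᵥ xs) := by
    have hdot := congrArg (fun v => star xs ⬝ᵥ v) h2
    have hvm : star xs ᵥ* As = lam.fst • star xs := by
      calc star xs ᵥ* As = star xs ᵥ* Asᴴ := by rw [hAsH]
        _ = star (As *ᵥ xs) := (Matrix.star_mulVec As xs).symm
        _ = star (lam.fst • xs) := by rw [h1]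
        _ = lam.fst • star xs := by
            funext i
            simp [hlamfst, mul_comm]
    simp only [dotProduct_add, dotProduct_smul, smul_eq_mul,
      Matrix.dotProduct_mulVec (star xs) As xI, hvm, smul_dotProduct] at hdot
    linear_combination hdot
  open scoped ComplexOrder in
  have hdenom : star xs ⬝ᵥ xs ≠ 0 := fun hc => hx (dotProduct_star_self_eq_zero.1 hc)
  have : star xs = fun i => starRingEnd ℂ (x i).fst := rfl
  rw [← this, key, mul_div_assoc, div_self hdenom, mul_one]
end

section
/- Two eigenvectors of a Hermitian dual complex matrix A, associated to eigenvalues λ = λ_st + λ_I ε and μ = μ_st + μ_I ε with λ_st ≠ μ_st, are orthogonal: x* y = 0. -/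
/-!
Dual complex conjugation makes `ℂ[ε]` a commutative star ring, so `A` is Hermitian in Mathlib's
sense and `(A x)* y = x* (A y)`. Applied to `x, y` this gives `(λ̄ - μ) x* y = 0`, and applied to
`x, x` it gives `(λ̄ - λ) x* x = 0`. A dual number is a unit exactly when its standard part is
nonzero; `x* x` has standard part `‖x_st‖² ≠ 0`, so `λ̄ = λ`, and then `λ - μ` is a unit since
`λ_st ≠ μ_st`, whence `x* y = 0`.
-/

open TrivSqZeroExt Matrix

@[simp]
lemma fst_dcConj (q : DualNumber ℂ) : (dcConj q).fst = starRingEnd ℂ q.fst := rfl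

@[simp]
lemma snd_dcConj (q : DualNumber ℂ) : (dcConj q).snd = starRingEnd ℂ q.snd := rfl

noncomputable instance : StarRing (DualNumber ℂ) where
  star := dcConj
  star_involutive q := by ext <;> simp
  star_mul p q := by ext <;> simp [mul_comm, add_comm]
  star_add p q := by ext <;> simp

lemma dcConj_comp_eq_star {ι : Type*} (x : ι → DualNumber ℂ) :
    (fun i => dcConj (x i)) = star x := rfl

lemma dcCT_eq_conjTranspose {m n : Type*} (A : Matrix m n (DualNumber ℂ)) : dcCT A = Aᴴ := rfl

lemma TrivSqZeroExt.fst_dotProduct {ι R M : Type*} [Fintype ι] [Semiring R] [AddCommMonoid M]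
    [Module R M] [Module Rᵐᵒᵖ M] (v w : ι → TrivSqZeroExt R M) :
    (v ⬝ᵥ w).fst = (fun i => (v i).fst) ⬝ᵥ (fun i => (w i).fst) := by
  simp only [dotProduct, fst_sum, fst_mul]

namespace Matrix.IsHermitian

variable {ι R : Type*} [Fintype ι] [CommRing R] [StarRing R] {A : Matrix ι ι R}
  {lam mu : R} {x y : ι → R}

theorem star_mul_star_dotProduct_eq_mul (hA : A.IsHermitian) (hx : A *ᵥ x = lam • x)
    (hy : A *ᵥ y = mu • y) : star lam * (star x ⬝ᵥ y) = mu * (star x ⬝ᵥ y) :=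
  calc star lam * (star x ⬝ᵥ y) = star (A *ᵥ x) ⬝ᵥ y := by
        rw [hx, star_smul, smul_dotProduct, smul_eq_mul]
    _ = star x ⬝ᵥ (A *ᵥ y) := by rw [star_mulVec, ← dotProduct_mulVec, hA.eq]
    _ = mu * (star x ⬝ᵥ y) := by rw [hy, dotProduct_smul, smul_eq_mul]

theorem isSelfAdjoint_of_mulVec_eq_smul (hA : A.IsHermitian) (hx : A *ᵥ x = lam • x)
    (hxx : IsUnit (star x ⬝ᵥ x)) : IsSelfAdjoint lam :=
  hxx.mul_left_injective (hA.star_mul_star_dotProduct_eq_mul hx hx)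

end Matrix.IsHermitian

open scoped ComplexOrder in
lemma DualNumber.isUnit_star_dotProduct_self {ι : Type*} [Fintype ι] {x : ι → DualNumber ℂ}
    (hx : (fun i => (x i).fst) ≠ 0) : IsUnit (star x ⬝ᵥ x) := by
  rw [isUnit_iff_isUnit_fst, isUnit_iff_ne_zero, TrivSqZeroExt.fst_dotProduct]
  exact dotProduct_star_self_eq_zero.not.2 hx

theorem dc_hermitian_eigenvectors_orthogonal_general {n : ℕ}
    (A : Matrix (Fin n) (Fin n) (DualNumber ℂ)) (hA : dcCT A = A)
    (lam mu : DualNumber ℂ) (x y : Fin n → DualNumber ℂ)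
    (hx : (fun i => (x i).fst) ≠ 0)
    (hlx : A *ᵥ x = lam • x) (hmy : A *ᵥ y = mu • y)
    (hne : lam.fst ≠ mu.fst) :
    (fun i => dcConj (x i)) ⬝ᵥ y = 0 := by
  have hA : A.IsHermitian := (dcCT_eq_conjTranspose A).symm.trans hA
  rw [dcConj_comp_eq_star]
  have hlam : star lam = lam :=
    (hA.isSelfAdjoint_of_mulVec_eq_smul hlx (DualNumber.isUnit_star_dotProduct_self hx)).star_eq
  have hswap := hA.star_mul_star_dotProduct_eq_mul hlx hmy
  rw [hlam] at hswap
  have hgap : IsUnit (lam - mu) :=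
    isUnit_iff_isUnit_fst.2 (isUnit_iff_ne_zero.2 (sub_ne_zero.2 hne))
  exact hgap.mul_right_eq_zero.1 (by rw [sub_mul, hswap, sub_self])

/-- Two eigenvectors of a Hermitian dual complex matrix `A`, associated to eigenvalues
`λ` and `μ` with distinct standard parts, are orthogonal: `x* y = 0`. -/
theorem dc_hermitian_eigenvectors_orthogonal {n : ℕ}
    (A : Matrix (Fin n) (Fin n) (DualNumber ℂ)) (hA : dcCT A = A)
    (lam mu : DualNumber ℂ) (x y : Fin n → DualNumber ℂ)
    (hx : (fun i => (x i).fst) ≠ 0) (hy : (fun i => (y i).fst) ≠ 0)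
    (hlx : A *ᵥ x = lam • x) (hmy : A *ᵥ y = mu • y)
    (hne : lam.fst ≠ mu.fst) :
    (fun i => dcConj (x i)) ⬝ᵥ y = 0 :=
  dc_hermitian_eigenvectors_orthogonal_general A hA lam mu x y hx hlx hmy hne
end
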